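/- arXiv:2009.11793 — 4 statements merged into one kernel-verified Lean document; each statement's English description precedes it below -/
import Mathlib

section
/- Let G be a graph, d, k nonnegative integers, and suppose there exists F ⊆ E(G) with |F| ≤ k such that G/F has maximum degree at most d. Then the number of vertices of G with degree at least d + 1 is at most k(d + 2). -/
open SimpleGraph

def contractMap {V : Type*} (F : Set (Sym2 V)) : V → (SimpleGraph.fromEdgeSet F).ConnectedComponent :=
  (SimpleGraph.fromEdgeSet F).connectedComponentMk

def contract {V : Type*} (G : SimpleGraph V) (F : Set (Sym2 V)) :
    SimpleGraph ((SimpleGraph.fromEdgeSet F).ConnectedComponent) where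
  Adj a b := a ≠ b ∧ ∃ u v : V, contractMap F u = a ∧ contractMap F v = b ∧ G.Adj u v
  symm := by
    constructor
    rintro a b ⟨hab, u, v, hu, hv, huv⟩
    exact ⟨hab.symm, v, u, hv, hu, huv.symm⟩
  loopless := by
    constructor
    rintro a ⟨h, -⟩
    exact h rfl

def maxDegreeLE {W : Type*} (H : SimpleGraph W) (d : ℕ) : Prop :=
  ∀ w : W, (H.neighborSet w).ncard ≤ d

lemma sym2_eq_mk_out {α : Type*} (e : Sym2 α) : e = s(e.out.1, e.out.2) := by
  exact e.out_eq.symm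

lemma isolated_reachable_eq {V : Type*} {H : SimpleGraph V} {v w : V}
    (h : ∀ u, ¬ H.Adj v u) (hr : H.Reachable v w) : v = w := by
  obtain ⟨p⟩ := hr
  cases p with
  | nil => rfl
  | cons h' _ => exact absurd h' (h _)

/-- If there is `F ⊆ E(G)` with `|F| ≤ k` such that `G/F` has maximum degree
at most `d`, then the number of vertices of `G` of degree at least `d + 1` is at most
`k * (d + 2)`. -/
theorem high_degree_vertices_bound
    {V : Type*} [Fintype V] (G : SimpleGraph V) (d k : ℕ)
    (F : Finset (Sym2 V)) (hFsub : ↑F ⊆ G.edgeSet) (hk : F.card ≤ k)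
    (hmax : maxDegreeLE (contract G (↑F : Set (Sym2 V))) d) :
    {v : V | d + 1 ≤ (G.neighborSet v).ncard}.ncard ≤ k * (d + 2) := by
  classical
  set H := SimpleGraph.fromEdgeSet (↑F : Set (Sym2 V)) with hH
  set cm := contractMap (↑F : Set (Sym2 V)) with hcm
  -- T : touched vertices
  set T : Finset V := F.biUnion (fun e => {e.out.1, e.out.2}) with hT
  have mem_T_of : ∀ {v : V} {e : Sym2 V}, e ∈ F → v ∈ e → v ∈ T := by
    intro v e he hve
    refine Finset.mem_biUnion.2 ⟨e, he, ?_⟩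
    rw [sym2_eq_mk_out e] at hve
    rcases Sym2.mem_iff.1 hve with h | h <;> simp [h]
  have isolated : ∀ {v : V}, v ∉ T → ∀ u, ¬ H.Adj v u := by
    intro v hv u hadj
    rw [hH, SimpleGraph.fromEdgeSet_adj] at hadj
    exact hv (mem_T_of hadj.1 (Sym2.mem_mk_left v u))
  -- injectivity of cm outside T
  have inj_out : ∀ {v w : V}, v ∉ T → cm v = cm w → v = w := by
    intro v w hv h
    exact isolated_reachable_eq (isolated hv) ((SimpleGraph.ConnectedComponent.eq).1 h)
  have Tcard : T.card ≤ 2 * F.card := by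
    calc T.card ≤ ∑ e ∈ F, ({e.out.1, e.out.2} : Finset V).card := Finset.card_biUnion_le
    _ ≤ ∑ _e ∈ F, 2 := Finset.sum_le_sum (fun e _ => Finset.card_insert_le _ _ |>.trans (by simp))
    _ = 2 * F.card := by rw [Finset.sum_const, smul_eq_mul, mul_comm]
  -- Big components
  set Big : Finset H.ConnectedComponent := F.image (fun e => cm e.out.1) with hBig
  have mem_Big : ∀ {v : V}, v ∈ T → cm v ∈ Big := by
    intro v hv
    obtain ⟨e, he, hve⟩ := Finset.mem_biUnion.1 hv
    refine Finset.mem_image.2 ⟨e, he, ?_⟩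
    have hnd : ¬ e.IsDiag := G.not_isDiag_of_mem_edgeSet (hFsub he)
    have hne : e.out.1 ≠ e.out.2 := by
      intro h
      exact hnd (by rw [sym2_eq_mk_out e]; exact Sym2.mk_isDiag_iff.2 h)
    have hadj : H.Adj e.out.1 e.out.2 := by
      rw [hH, SimpleGraph.fromEdgeSet_adj]
      exact ⟨by rw [← sym2_eq_mk_out e]; exact he, hne⟩
    have hcc : cm e.out.1 = cm e.out.2 := SimpleGraph.ConnectedComponent.eq.2 hadj.reachable
    simp only [Finset.mem_insert, Finset.mem_singleton] at hve
    rcases hve with rfl | rfl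
    · rfl
    · exact hcc
  -- B C : vertices outside T whose (singleton) component is adjacent to C
  set B : H.ConnectedComponent → Finset V :=
    fun C => Finset.univ.filter (fun v => v ∉ T ∧ (contract G (↑F : Set (Sym2 V))).Adj C (cm v)) with hB
  have Bcard : ∀ C, (B C).card ≤ d := by
    intro C
    have hinj : Set.InjOn cm (B C : Set V) := by
      intro a ha b hb hab
      simp only [hB, Finset.coe_filter, Set.mem_setOf_eq] at ha hb
      exact inj_out ha.2.1 hab
    have hsub : cm '' (B C : Set V) ⊆ (contract G (↑F : Set (Sym2 V))).neighborSet C := by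
      rintro x ⟨v, hv, rfl⟩
      simp only [hB, Finset.coe_filter, Set.mem_setOf_eq] at hv
      exact hv.2.2
    calc (B C).card = (B C : Set V).ncard := (Set.ncard_coe_finset _).symm
      _ = (cm '' (B C : Set V)).ncard := (Set.ncard_image_of_injOn hinj).symm
      _ ≤ ((contract G (↑F : Set (Sym2 V))).neighborSet C).ncard :=
          Set.ncard_le_ncard hsub (Set.toFinite _)
      _ ≤ d := hmax C
  -- the high-degree set
  set S : Finset V := Finset.univ.filter (fun v => d + 1 ≤ (G.neighborSet v).ncard) with hS
  have hset : {v : V | d + 1 ≤ (G.neighborSet v).ncard} = (S : Set V) := by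
    ext v; simp [hS]
  rw [hset, Set.ncard_coe_finset]
  have hSsub : S ⊆ T ∪ Big.biUnion B := by
    intro v hv
    by_cases hvT : v ∈ T
    · exact Finset.mem_union_left _ hvT
    have hdeg : d + 1 ≤ (G.neighborSet v).ncard := by
      simpa [hS] using hv
    -- cm is not injective on the neighborhood of v
    have hninj : ¬ Set.InjOn cm (G.neighborSet v) := by
      intro hinj
      have hsub : cm '' (G.neighborSet v) ⊆ (contract G (↑F : Set (Sym2 V))).neighborSet (cm v) := by
        rintro x ⟨u, hu, rfl⟩
        refine ⟨?_, v, u, rfl, rfl, hu⟩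
        intro h
        exact G.irrefl (by rwa [inj_out hvT h] at hu)
      have : (G.neighborSet v).ncard ≤ d := by
        calc (G.neighborSet v).ncard = (cm '' (G.neighborSet v)).ncard :=
              (Set.ncard_image_of_injOn hinj).symm
          _ ≤ ((contract G (↑F : Set (Sym2 V))).neighborSet (cm v)).ncard :=
              Set.ncard_le_ncard hsub (Set.toFinite _)
          _ ≤ d := hmax _
      omega
    rw [Set.InjOn] at hninj
    push_neg at hninj
    obtain ⟨u, hu, w, hw, huw, hne⟩ := hninj
    -- u belongs to T
    have huT : u ∈ T := by
      by_contra huT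
      exact hne (inj_out huT huw)
    have hcmne : cm u ≠ cm v := by
      intro h
      have := inj_out hvT h.symm
      subst this
      exact hvT huT
    refine Finset.mem_union_right _ (Finset.mem_biUnion.2 ⟨cm u, mem_Big huT, ?_⟩)
    simp only [hB, Finset.mem_filter, Finset.mem_univ, true_and]
    exact ⟨hvT, hcmne, u, v, rfl, rfl, (hu : G.Adj v u).symm⟩
  calc S.card ≤ (T ∪ Big.biUnion B).card := Finset.card_le_card hSsub
    _ ≤ T.card + (Big.biUnion B).card := Finset.card_union_le _ _
    _ ≤ T.card + ∑ C ∈ Big, (B C).card := by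
        gcongr
        exact Finset.card_biUnion_le
    _ ≤ T.card + ∑ _C ∈ Big, d := by
        gcongr with C hC
        exact Bcard C
    _ = T.card + Big.card * d := by rw [Finset.sum_const, smul_eq_mul]
    _ ≤ 2 * k + k * d := by
        have h1 : Big.card ≤ k := Finset.card_image_le.trans hk
        have h2 : T.card ≤ 2 * k := Tcard.trans (by omega)
        gcongr
    _ = k * (d + 2) := by ring
end

section
/- Let G be a graph and d, k positive integers. Suppose L is a set of vertices of G such that: (i) for every v ∈ L, N(v) is an independent set of size at least d + 1; (ii) for distinct u, v ∈ L, N(u) ∩ N(v) = ∅; and (iii) |L| ≥ k. Then there is no set F ⊆ E(G) with |F| ≤ k − 1 such that G/F has maximum degree at most d. -/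
open SimpleGraph

section Aux

variable {V : Type*}

/-- Trichotomy for reachability after adding one edge `s(x,y)`. -/
lemma reach_insert_edge {F : Set (Sym2 V)} {x y u v : V}
    (h : (fromEdgeSet (insert s(x, y) F)).Reachable u v) :
    (fromEdgeSet F).Reachable u v ∨
      ((fromEdgeSet F).Reachable u x ∧ (fromEdgeSet F).Reachable y v) ∨
      ((fromEdgeSet F).Reachable u y ∧ (fromEdgeSet F).Reachable x v) := by
  obtain ⟨w⟩ := h
  induction w with
  | nil => exact Or.inl (Reachable.refl _)
  | @cons a b c hab p ih =>
    rw [fromEdgeSet_adj, Set.mem_insert_iff] at hab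
    obtain ⟨he | he, hne⟩ := hab
    · rw [Sym2.eq_iff] at he
      obtain ⟨rfl, rfl⟩ | ⟨rfl, rfl⟩ := he
      · rcases ih with h1 | ⟨h1, h2⟩ | ⟨h1, h2⟩
        · exact Or.inr (Or.inl ⟨Reachable.refl _, h1⟩)
        · exact Or.inl (h1.symm.trans h2)
        · exact Or.inl h2
      · rcases ih with h1 | ⟨h1, h2⟩ | ⟨h1, h2⟩
        · exact Or.inr (Or.inr ⟨Reachable.refl _, h1⟩)
        · exact Or.inl h2
        · exact Or.inl (h1.symm.trans h2)
    · have hab' : (fromEdgeSet F).Reachable a b :=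
        ((fromEdgeSet_adj _).mpr ⟨he, hne⟩).reachable
      rcases ih with h1 | ⟨h1, h2⟩ | ⟨h1, h2⟩
      · exact Or.inl (hab'.trans h1)
      · exact Or.inr (Or.inl ⟨hab'.trans h1, h2⟩)
      · exact Or.inr (Or.inr ⟨hab'.trans h1, h2⟩)

lemma card_comp_le_insert [Finite V] (F : Set (Sym2 V)) (e : Sym2 V) :
    Nat.card (fromEdgeSet F).ConnectedComponent ≤
      Nat.card (fromEdgeSet (insert e F)).ConnectedComponent + 1 := by
  haveI : Finite (fromEdgeSet F).ConnectedComponent := Quot.finite _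
  haveI : Finite (fromEdgeSet (insert e F)).ConnectedComponent := Quot.finite _
  induction e using Sym2.ind with
  | _ x y =>
    by_cases hxy : x = y
    · subst hxy
      have heq : fromEdgeSet (insert s(x, x) F) = fromEdgeSet F := by
        ext a b
        simp only [fromEdgeSet_adj, Set.mem_insert_iff, Sym2.eq_iff]
        constructor
        · rintro ⟨h1 | h1, h2⟩
          · rcases h1 with ⟨rfl, rfl⟩ | ⟨rfl, rfl⟩ <;> exact absurd rfl h2
          · exact ⟨h1, h2⟩
        · rintro ⟨h1, h2⟩; exact ⟨Or.inr h1, h2⟩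
      rw [heq]
      omega
    · set G1 := fromEdgeSet (insert s(x, y) F) with hG1
      set G2 := fromEdgeSet F with hG2
      have hle : G2 ≤ G1 := fromEdgeSet_mono (Set.subset_insert _ _)
      set φ : G2.ConnectedComponent → G1.ConnectedComponent :=
        ConnectedComponent.map (Hom.ofLE hle) with hφ
      have hφmk : ∀ v : V, φ (G2.connectedComponentMk v) = G1.connectedComponentMk v :=
        fun v => rfl
      have hinj : Set.InjOn φ {a | a ≠ G2.connectedComponentMk y} := by
        rintro a ha b hb hab
        obtain ⟨a, rfl⟩ := a.exists_rep
        obtain ⟨b, rfl⟩ := b.exists_rep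
        have : G1.Reachable a b := by
          rw [← SimpleGraph.ConnectedComponent.eq]
          exact hab
        rcases reach_insert_edge this with h1 | ⟨h1, h2⟩ | ⟨h1, h2⟩
        · exact SimpleGraph.ConnectedComponent.sound h1
        · exact absurd (SimpleGraph.ConnectedComponent.sound h2.symm) hb
        · exact absurd (SimpleGraph.ConnectedComponent.sound h1) ha
      have h1 : ({a | a ≠ G2.connectedComponentMk y} : Set G2.ConnectedComponent).ncard ≤
          Nat.card G1.ConnectedComponent := by
        rw [← Set.ncard_image_of_injOn hinj, ← Set.ncard_univ]
        exact Set.ncard_le_ncard (Set.subset_univ _) (Set.toFinite _)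
      have h2 : Nat.card G2.ConnectedComponent ≤
          ({a | a ≠ G2.connectedComponentMk y} : Set G2.ConnectedComponent).ncard + 1 := by
        rw [← Set.ncard_univ]
        have : (Set.univ : Set G2.ConnectedComponent) ⊆
            insert (G2.connectedComponentMk y) {a | a ≠ G2.connectedComponentMk y} := by
          intro a _
          by_cases h : a = G2.connectedComponentMk y
          · exact Or.inl h
          · exact Or.inr h
        calc (Set.univ : Set G2.ConnectedComponent).ncard
            ≤ (insert (G2.connectedComponentMk y)
                {a | a ≠ G2.connectedComponentMk y}).ncard :=
              Set.ncard_le_ncard this (Set.toFinite _)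
          _ ≤ _ + 1 := Set.ncard_insert_le _ _
      omega

lemma card_le_comp_add_card [Finite V] (F : Finset (Sym2 V)) :
    Nat.card V ≤ Nat.card (fromEdgeSet (↑F : Set (Sym2 V))).ConnectedComponent + F.card := by
  classical
  induction F using Finset.induction with
  | empty =>
    have hbij : Function.Bijective ((⊥ : SimpleGraph V).connectedComponentMk) := by
      constructor
      · intro a b hab
        exact reachable_bot.mp (SimpleGraph.ConnectedComponent.eq.mp hab)
      · intro a
        exact a.exists_rep
    rw [Finset.coe_empty, fromEdgeSet_empty, Finset.card_empty, add_zero,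
      Nat.card_eq_of_bijective _ hbij]
  | @insert e F he ih =>
    rw [Finset.coe_insert, Finset.card_insert_of_notMem he]
    calc Nat.card V ≤ Nat.card (fromEdgeSet (↑F : Set (Sym2 V))).ConnectedComponent + F.card :=
        ih
      _ ≤ (Nat.card (fromEdgeSet (insert e (↑F : Set (Sym2 V)))).ConnectedComponent + 1)
          + F.card := by
          have := card_comp_le_insert (↑F : Set (Sym2 V)) e
          omega
      _ = _ := by ring

end Aux

section Count

variable {V : Type*} [Fintype V]

lemma count_lemma (G : SimpleGraph V) (d : ℕ) (hd : 1 ≤ d) (F : Set (Sym2 V))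
    (hdeg : maxDegreeLE (contract G F) d) :
    ∀ n (L U : Set V), L.ncard = n →
      (∀ v ∈ L, d + 1 ≤ (G.neighborSet v).ncard) →
      (∀ u ∈ L, ∀ v ∈ L, u ≠ v → G.neighborSet u ∩ G.neighborSet v = ∅) →
      (∀ v ∈ L, insert v (G.neighborSet v) ⊆ U) →
      L.ncard + (contractMap F '' U).ncard ≤ U.ncard := by
  set c := contractMap F with hc
  have himg : ∀ v : V, c '' (insert v (G.neighborSet v)) ⊆
      insert (c v) ((contract G F).neighborSet (c v)) := by
    rintro v _ ⟨x, hx, rfl⟩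
    rcases hx with rfl | hx
    · exact Set.mem_insert _ _
    · by_cases hcx : c x = c v
      · rw [hcx]; exact Set.mem_insert _ _
      · exact Set.mem_insert_of_mem _ ⟨fun h => hcx h.symm, v, x, rfl, rfl, hx⟩
  have hstar : ∀ v : V, (c '' (insert v (G.neighborSet v))).ncard ≤ d + 1 := by
    intro v
    calc (c '' (insert v (G.neighborSet v))).ncard
        ≤ (insert (c v) ((contract G F).neighborSet (c v))).ncard :=
          Set.ncard_le_ncard (himg v) (Set.toFinite _)
      _ ≤ ((contract G F).neighborSet (c v)).ncard + 1 := Set.ncard_insert_le _ _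
      _ ≤ d + 1 := by have := hdeg (c v); omega
  intro n
  induction n using Nat.strong_induction_on with
  | _ n ih =>
    intro L U hn hsize hdisj hsub
    have hstarint : ∀ w ∈ L, ∀ a ∈ L, w ≠ a → ∀ x, x ∈ insert w (G.neighborSet w) →
        x ∈ insert a (G.neighborSet a) → G.Adj w a := by
      intro w hw a ha hwa x hx1 hx2
      rw [Set.mem_insert_iff] at hx1 hx2
      rcases hx1 with rfl | h1
      · rcases hx2 with h2 | h2
        · exact absurd h2 hwa
        · exact ((G.mem_neighborSet _ _).mp h2).symm
      · rcases hx2 with rfl | h2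
        · exact (G.mem_neighborSet _ _).mp h1
        · exfalso
          have := hdisj w hw a ha hwa
          rw [Set.eq_empty_iff_forall_notMem] at this
          exact this x ⟨h1, h2⟩
    rcases Nat.eq_zero_or_pos n with rfl | hnpos
    · have hL0 : L = ∅ := (Set.ncard_eq_zero (Set.toFinite _)).mp hn
      rw [hn]
      simpa using Set.ncard_image_le (Set.toFinite U)
    · obtain ⟨v, hv⟩ : L.Nonempty := Set.nonempty_of_ncard_ne_zero (by omega)
      have hSv : insert v (G.neighborSet v) ⊆ U := hsub v hv
      have hSvcard : d + 2 ≤ (insert v (G.neighborSet v)).ncard := by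
        rw [Set.ncard_insert_of_notMem (by simp) (Set.toFinite _)]
        have := hsize v hv
        omega
      by_cases hmatch : ∃ u ∈ L, G.Adj v u
      · -- matched case
        obtain ⟨u, hu, hadj⟩ := hmatch
        have hvu : v ≠ u := G.ne_of_adj hadj
        set Sv := insert v (G.neighborSet v) with hSvdef
        set Su := insert u (G.neighborSet u) with hSudef
        set T := Sv ∪ Su with hT
        have hSu : Su ⊆ U := hsub u hu
        have hSucard : d + 2 ≤ Su.ncard := by
          rw [hSudef, Set.ncard_insert_of_notMem (by simp) (Set.toFinite _)]
          have := hsize u hu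
          omega
        have hinter : Sv ∩ Su ⊆ {v, u} := by
          rintro x ⟨hx1, hx2⟩
          rcases hx1 with rfl | hx1
          · exact Or.inl rfl
          · rcases hx2 with rfl | hx2
            · exact Or.inr rfl
            · exfalso
              have := hdisj v hv u hu hvu
              exact absurd (Set.eq_empty_iff_forall_notMem.mp this x ⟨hx1, hx2⟩) (by simp)
        have hTcard : 2 * d + 2 ≤ T.ncard := by
          rw [hT]
          have h1 := Set.ncard_union_add_ncard_inter Sv Su (Set.toFinite _) (Set.toFinite _)
          have h2 : (Sv ∩ Su).ncard ≤ 2 := by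
            calc (Sv ∩ Su).ncard ≤ ({v, u} : Set V).ncard :=
                Set.ncard_le_ncard hinter (Set.toFinite _)
              _ = 2 := Set.ncard_pair hvu
          omega
        -- the set of L-vertices to remove
        set L2 := L \ {v, u} with hL2
        have hL2sub : L2 ⊆ L := Set.diff_subset
        have hpair_sub : ({v, u} : Set V) ⊆ L := by
          rintro x (rfl | rfl) <;> assumption
        have hncard2 : (2 : ℕ) ≤ n := by
          have : ({v, u} : Set V).ncard ≤ L.ncard :=
            Set.ncard_le_ncard hpair_sub (Set.toFinite _)
          rw [Set.ncard_pair hvu] at this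
          omega
        have hL2card : L2.ncard = n - 2 := by
          rw [hL2, Set.ncard_diff hpair_sub (Set.toFinite _), Set.ncard_pair hvu, hn]
        -- stars of L2 avoid T
        have hsub2 : ∀ w ∈ L2, insert w (G.neighborSet w) ⊆ U \ T := by
          intro w hw x hx
          have hwL : w ∈ L := hL2sub hw
          have hwv : w ≠ v := by rintro rfl; exact hw.2 (Or.inl rfl)
          have hwu : w ≠ u := by rintro rfl; exact hw.2 (Or.inr rfl)
          refine ⟨hsub w hwL hx, ?_⟩
          rintro (hx2 | hx2)
          · have hadj2 : G.Adj w v := hstarint w hwL v hv hwv x hx hx2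
            have hemp := hdisj w hwL u hu hwu
            rw [Set.eq_empty_iff_forall_notMem] at hemp
            exact hemp v ⟨(G.mem_neighborSet _ _).mpr hadj2, (G.mem_neighborSet _ _).mpr hadj.symm⟩
          · have hadj2 : G.Adj w u := hstarint w hwL u hu hwu x hx hx2
            have hemp := hdisj w hwL v hv hwv
            rw [Set.eq_empty_iff_forall_notMem] at hemp
            exact hemp u ⟨(G.mem_neighborSet _ _).mpr hadj2, (G.mem_neighborSet _ _).mpr hadj⟩
        -- bound on image of T
        have hTimg : (c '' T).ncard ≤ 2 * d := by
          by_cases hcu : c u = c v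
          · have hTsub : c '' T ⊆ insert (c v) ((contract G F).neighborSet (c v)) := by
              rintro _ ⟨x, hx | hx, rfl⟩
              · exact himg v (Set.mem_image_of_mem c hx)
              · have := himg u (Set.mem_image_of_mem c hx)
                rcases this with h | h
                · rw [h, hcu]; exact Set.mem_insert _ _
                · rw [hcu] at h
                  exact Set.mem_insert_of_mem _ h
            calc (c '' T).ncard
                ≤ (insert (c v) ((contract G F).neighborSet (c v))).ncard :=
                  Set.ncard_le_ncard hTsub (Set.toFinite _)
              _ ≤ ((contract G F).neighborSet (c v)).ncard + 1 := Set.ncard_insert_le _ _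
              _ ≤ 2 * d := by have := hdeg (c v); omega
          · have hadjc : (contract G F).Adj (c v) (c u) :=
              ⟨fun h => hcu h.symm, v, u, rfl, rfl, hadj⟩
            have hTsub : c '' T ⊆ insert (c v) (insert (c u)
                (((contract G F).neighborSet (c v) \ {c u}) ∪
                 ((contract G F).neighborSet (c u) \ {c v}))) := by
              rintro _ ⟨x, hx | hx, rfl⟩
              · rcases himg v (Set.mem_image_of_mem c hx) with h | h
                · rw [h]; exact Set.mem_insert _ _
                · by_cases h2 : c x = c u
                  · rw [h2]; exact Set.mem_insert_of_mem _ (Set.mem_insert _ _)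
                  · exact Set.mem_insert_of_mem _ (Set.mem_insert_of_mem _
                      (Or.inl ⟨h, h2⟩))
              · rcases himg u (Set.mem_image_of_mem c hx) with h | h
                · rw [h]; exact Set.mem_insert_of_mem _ (Set.mem_insert _ _)
                · by_cases h2 : c x = c v
                  · rw [h2]; exact Set.mem_insert _ _
                  · exact Set.mem_insert_of_mem _ (Set.mem_insert_of_mem _
                      (Or.inr ⟨h, h2⟩))
            have hd1 : ((contract G F).neighborSet (c v) \ {c u}).ncard ≤ d - 1 := by
              rw [Set.ncard_diff_singleton_of_mem (show c u ∈ (contract G F).neighborSet (c v) from hadjc)]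
              have := hdeg (c v); omega
            have hd2 : ((contract G F).neighborSet (c u) \ {c v}).ncard ≤ d - 1 := by
              rw [Set.ncard_diff_singleton_of_mem (show c v ∈ (contract G F).neighborSet (c u) from hadjc.symm)]
              have := hdeg (c u); omega
            calc (c '' T).ncard
                ≤ (insert (c v) (insert (c u)
                    (((contract G F).neighborSet (c v) \ {c u}) ∪
                     ((contract G F).neighborSet (c u) \ {c v})))).ncard :=
                  Set.ncard_le_ncard hTsub (Set.toFinite _)
              _ ≤ (insert (c u)
                    (((contract G F).neighborSet (c v) \ {c u}) ∪
                     ((contract G F).neighborSet (c u) \ {c v}))).ncard + 1 :=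
                  Set.ncard_insert_le _ _
              _ ≤ ((((contract G F).neighborSet (c v) \ {c u}) ∪
                     ((contract G F).neighborSet (c u) \ {c v})).ncard + 1) + 1 := by
                  have := Set.ncard_insert_le (c u)
                    (((contract G F).neighborSet (c v) \ {c u}) ∪
                     ((contract G F).neighborSet (c u) \ {c v}))
                  omega
              _ ≤ 2 * d := by
                  have := Set.ncard_union_le
                    ((contract G F).neighborSet (c v) \ {c u})
                    ((contract G F).neighborSet (c u) \ {c v})
                  omega
        -- apply IH
        have hIH := ih (n - 2) (by omega) L2 (U \ T) hL2card
          (fun w hw => hsize w (hL2sub hw))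
          (fun a ha b hb hab => hdisj a (hL2sub ha) b (hL2sub hb) hab)
          hsub2
        rw [hL2card] at hIH
        have hTU : T ⊆ U := Set.union_subset hSv hSu
        have hUsplit : (U \ T).ncard = U.ncard - T.ncard :=
          Set.ncard_diff hTU (Set.toFinite _)
        have hTle : T.ncard ≤ U.ncard := Set.ncard_le_ncard hTU (Set.toFinite _)
        have hUimg : (c '' U).ncard ≤ (c '' (U \ T)).ncard + (c '' T).ncard := by
          have hsplit : c '' U ⊆ c '' (U \ T) ∪ c '' T := by
            rintro _ ⟨x, hx, rfl⟩
            by_cases hxT : x ∈ T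
            · exact Or.inr (Set.mem_image_of_mem c hxT)
            · exact Or.inl (Set.mem_image_of_mem c ⟨hx, hxT⟩)
          calc (c '' U).ncard ≤ (c '' (U \ T) ∪ c '' T).ncard :=
              Set.ncard_le_ncard hsplit (Set.toFinite _)
            _ ≤ _ := Set.ncard_union_le _ _
        rw [hn]
        omega
      · -- unmatched case
        push_neg at hmatch
        set Sv := insert v (G.neighborSet v) with hSvdef
        set L2 := L \ {v} with hL2
        have hL2sub : L2 ⊆ L := Set.diff_subset
        have hL2card : L2.ncard = n - 1 := by
          rw [hL2, Set.ncard_diff_singleton_of_mem hv, hn]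
        have hsub2 : ∀ w ∈ L2, insert w (G.neighborSet w) ⊆ U \ Sv := by
          intro w hw x hx
          have hwL : w ∈ L := hL2sub hw
          have hwv : w ≠ v := by rintro rfl; exact hw.2 rfl
          refine ⟨hsub w hwL hx, ?_⟩
          intro hx2
          have hadj2 : G.Adj w v := hstarint w hwL v hv hwv x hx hx2
          exact hmatch w hwL hadj2.symm
        have hIH := ih (n - 1) (by omega) L2 (U \ Sv) hL2card
          (fun w hw => hsize w (hL2sub hw))
          (fun a ha b hb hab => hdisj a (hL2sub ha) b (hL2sub hb) hab)
          hsub2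
        rw [hL2card] at hIH
        have hUsplit : (U \ Sv).ncard = U.ncard - Sv.ncard :=
          Set.ncard_diff hSv (Set.toFinite _)
        have hSvle : Sv.ncard ≤ U.ncard := Set.ncard_le_ncard hSv (Set.toFinite _)
        have hUimg : (c '' U).ncard ≤ (c '' (U \ Sv)).ncard + (c '' Sv).ncard := by
          have hsplit : c '' U ⊆ c '' (U \ Sv) ∪ c '' Sv := by
            rintro _ ⟨x, hx, rfl⟩
            by_cases hxT : x ∈ Sv
            · exact Or.inr (Set.mem_image_of_mem c hxT)
            · exact Or.inl (Set.mem_image_of_mem c ⟨hx, hxT⟩)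
          calc (c '' U).ncard ≤ (c '' (U \ Sv) ∪ c '' Sv).ncard :=
              Set.ncard_le_ncard hsplit (Set.toFinite _)
            _ ≤ _ := Set.ncard_union_le _ _
        have hSvimg : (c '' Sv).ncard ≤ d + 1 := hstar v
        have hSvcard2 : d + 2 ≤ Sv.ncard := hSvcard
        rw [hn]
        omega

end Count

/-- If `L` is a set of vertices such that each `v ∈ L` has an independent open
neighborhood of size at least `d + 1`, the open neighborhoods of distinct vertices of `L`
are disjoint, and `|L| ≥ k`, then no set `F` of at most `k - 1` edges of `G` makes `G/F`
have maximum degree at most `d`. -/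
theorem no_solution_of_disjoint_stars
    {V : Type*} [Fintype V] (G : SimpleGraph V) (d k : ℕ) (hd : 1 ≤ d) (hk1 : 1 ≤ k)
    (L : Set V)
    (hind : ∀ v ∈ L, ∀ x ∈ G.neighborSet v, ∀ y ∈ G.neighborSet v, ¬ G.Adj x y)
    (hsize : ∀ v ∈ L, d + 1 ≤ (G.neighborSet v).ncard)
    (hdisj : ∀ u ∈ L, ∀ v ∈ L, u ≠ v → G.neighborSet u ∩ G.neighborSet v = ∅)
    (hL : k ≤ L.ncard) :
    ¬ ∃ F : Finset (Sym2 V), ↑F ⊆ G.edgeSet ∧ F.card ≤ k - 1 ∧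
      maxDegreeLE (contract G (↑F : Set (Sym2 V))) d := by
  rintro ⟨F, hFE, hFcard, hdeg⟩
  haveI : Finite (fromEdgeSet (↑F : Set (Sym2 V))).ConnectedComponent := Quot.finite _
  have hcount := count_lemma G d hd (↑F : Set (Sym2 V)) hdeg L.ncard L Set.univ rfl
    hsize hdisj (fun v _ => Set.subset_univ _)
  have hsurj : Function.Surjective (contractMap (↑F : Set (Sym2 V))) := fun a => a.exists_rep
  rw [Set.image_univ, Set.range_eq_univ.mpr hsurj, Set.ncard_univ, Set.ncard_univ] at hcount
  have hedge := card_le_comp_add_card (V := V) F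
  omega
end

section
/- Let G be a graph whose vertex set is partitioned into V_r and V_b, let k, d be integers, and suppose F ⊆ E(G) is such that: |F| ≤ k, G/F has maximum degree at most d, every endpoint of every edge of F lies in V_r, and for every connected component C of G[V_r], either C ∩ V(F) = ∅ or C ⊆ V(F). If some vertex v ∈ V_b has neighbors in d + 1 pairwise distinct connected components of G[V_r], then no such F exists (the labeled instance is a No instance). -/
open SimpleGraph

lemma reach_induce {V : Type*} (G : SimpleGraph V) (Vr : Set V) (F : Set (Sym2 V))
    (hFE : F ⊆ G.edgeSet) (hF : ∀ e ∈ F, ∀ x ∈ e, x ∈ Vr) :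
    ∀ {a b : V}, (SimpleGraph.fromEdgeSet F).Reachable a b → ∀ (ha : a ∈ Vr),
      ∃ hb : b ∈ Vr, (G.induce Vr).Reachable ⟨a, ha⟩ ⟨b, hb⟩ := by
  intro a b h
  obtain ⟨w⟩ := h
  induction w with
  | nil => exact fun ha => ⟨ha, Reachable.refl _⟩
  | @cons a c b h p ih =>
    intro ha
    rw [fromEdgeSet_adj] at h
    have hc : c ∈ Vr := hF _ h.1 c (Sym2.mem_mk_right a c)
    obtain ⟨hb, hr⟩ := ih hc
    have hadj : (G.induce Vr).Adj ⟨a, ha⟩ ⟨c, hc⟩ := by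
      simp only [comap_adj, Function.Embedding.coe_subtype]
      exact (G.mem_edgeSet).1 (hFE h.1)
    exact ⟨hb, (hadj.reachable).trans hr⟩

lemma comp_singleton {V : Type*} (Vr : Set V) (F : Set (Sym2 V))
    (hF : ∀ e ∈ F, ∀ x ∈ e, x ∈ Vr) {v x : V} (hv : v ∉ Vr)
    (h : contractMap F x = contractMap F v) : x = v := by
  have hr : (SimpleGraph.fromEdgeSet F).Reachable v x :=
    ((SimpleGraph.ConnectedComponent.eq).1 h).symm
  obtain ⟨w⟩ := hr
  cases w with
  | nil => rfl
  | cons h p =>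
    rw [fromEdgeSet_adj] at h
    exact absurd (hF _ h.1 v (Sym2.mem_mk_left _ _)) hv

/-- If some vertex `v ∉ V_r` has neighbors in `d + 1` pairwise distinct
connected components of `G[V_r]`, then there is no set `F` of at most `k` edges of `G`
with all endpoints in `V_r`, closed under connected components of `G[V_r]`, such that
`G/F` has maximum degree at most `d`. -/
theorem labeled_no_instance_of_many_components
    {V : Type*} [Fintype V] (G : SimpleGraph V) (Vr : Set V) (k d : ℕ)
    (v : V) (hv : v ∉ Vr)
    (u : Fin (d + 1) → ↥Vr)
    (hadj : ∀ i, G.Adj v ↑(u i))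
    (hcomp : ∀ i j, i ≠ j → ¬ (G.induce Vr).Reachable (u i) (u j)) :
    ¬ ∃ F : Finset (Sym2 V), ↑F ⊆ G.edgeSet ∧ F.card ≤ k ∧
      maxDegreeLE (contract G (↑F : Set (Sym2 V))) d ∧
      (∀ e ∈ F, ∀ x ∈ e, x ∈ Vr) ∧
      (∀ x y : ↥Vr, (G.induce Vr).Reachable x y →
        (∃ e ∈ F, (x : V) ∈ e) → ∃ e ∈ F, (y : V) ∈ e) := by
  classical
  rintro ⟨F, hFE, -, hdeg, hF, -⟩
  set Fs : Set (Sym2 V) := (↑F : Set (Sym2 V))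
  -- the map sending i to the component of u i
  set f : Fin (d + 1) → (SimpleGraph.fromEdgeSet Fs).ConnectedComponent :=
    fun i => contractMap Fs ((u i : V)) with hf
  have hne : ∀ i, f i ≠ contractMap Fs v := by
    intro i h
    have := comp_singleton Vr Fs hF hv h
    exact hv (this ▸ (u i).2)
  have hinj : Function.Injective f := by
    intro i j hij
    by_contra hne'
    have hr : (SimpleGraph.fromEdgeSet Fs).Reachable (u i) (u j) :=
      (SimpleGraph.ConnectedComponent.eq).1 hij
    obtain ⟨hb, hr'⟩ := reach_induce G Vr Fs hFE hF hr (u i).2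
    have : (G.induce Vr).Reachable (u i) (u j) := by
      convert hr' <;> simp
    exact hcomp i j hne' this
  -- each f i is a neighbor of the component of v in the contracted graph
  have hmem : ∀ i, f i ∈ (contract G Fs).neighborSet (contractMap Fs v) := by
    intro i
    refine ⟨(hne i).symm, v, (u i), rfl, rfl, hadj i⟩
  have hcard : (d + 1 : ℕ) ≤ ((contract G Fs).neighborSet (contractMap Fs v)).ncard := by
    have hsub : Set.range f ⊆ (contract G Fs).neighborSet (contractMap Fs v) := by
      rintro x ⟨i, rfl⟩; exact hmem i
    calc (d + 1 : ℕ) = (Set.range f).ncard := by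
          rw [← Set.image_univ, Set.ncard_image_of_injective _ hinj, Set.ncard_univ,
            Nat.card_eq_fintype_card, Fintype.card_fin]
      _ ≤ _ := Set.ncard_le_ncard hsub (Set.toFinite _)
  have := hdeg (contractMap Fs v)
  omega
end

section
/- Let G be obtained from bipartite graph pieces as follows: let K be the complete bipartite graph with parts B and U, and attach to every u ∈ U exactly p pendant vertices (each adjacent only to u). If |B| + p > d and |U| ≥ k + 1, then any F ⊆ E(G) with |F| ≤ k such that G/F has maximum degree at most d must merge, for every u ∈ U, at least two vertices of N[u] into one witness set; consequently at least one of the following holds for each u: an edge of F is incident to u or a pendant neighbor of u, or two vertices of B are in a common witness set. -/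
open SimpleGraph

/-- The gadget graph: a complete bipartite graph with parts `B` and `U`, together with `p`
pendant vertices attached to each `u ∈ U`. Vertices: `B ⊕ U ⊕ U × Fin p`. -/
def gadget (B U : Type*) (p : ℕ) : SimpleGraph (B ⊕ U ⊕ U × Fin p) where
  Adj x y :=
    (∃ b u, x = Sum.inl b ∧ y = Sum.inr (Sum.inl u)) ∨
    (∃ b u, y = Sum.inl b ∧ x = Sum.inr (Sum.inl u)) ∨
    (∃ u i, x = Sum.inr (Sum.inl u) ∧ y = Sum.inr (Sum.inr (u, i))) ∨
    (∃ u i, y = Sum.inr (Sum.inl u) ∧ x = Sum.inr (Sum.inr (u, i)))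
  symm := by
    constructor
    rintro x y (⟨b, u, h1, h2⟩ | ⟨b, u, h1, h2⟩ | ⟨u, i, h1, h2⟩ | ⟨u, i, h1, h2⟩)
    · exact Or.inr (Or.inl ⟨b, u, h1, h2⟩)
    · exact Or.inl ⟨b, u, h1, h2⟩
    · exact Or.inr (Or.inr (Or.inr ⟨u, i, h1, h2⟩))
    · exact Or.inr (Or.inr (Or.inl ⟨u, i, h1, h2⟩))
  loopless := by
    constructor
    rintro x (⟨b, u, h1, h2⟩ | ⟨b, u, h1, h2⟩ | ⟨u, i, h1, h2⟩ | ⟨u, i, h1, h2⟩) <;>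
      subst h1 <;> simp_all


lemma merge_edge {V : Type*} (F : Finset (Sym2 V)) {x y : V} (hne : x ≠ y)
    (h : (SimpleGraph.fromEdgeSet (↑F : Set _)).connectedComponentMk x =
         (SimpleGraph.fromEdgeSet (↑F : Set _)).connectedComponentMk y) :
    ∃ e ∈ F, x ∈ e := by
  have hr : (SimpleGraph.fromEdgeSet (↑F : Set _)).Reachable x y :=
    SimpleGraph.ConnectedComponent.eq.mp h
  obtain ⟨w⟩ := hr
  cases w with
  | nil => exact absurd rfl hne
  | cons h w' =>
    rw [SimpleGraph.fromEdgeSet_adj] at h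
    exact ⟨_, h.1, Sym2.mem_mk_left _ _⟩

lemma gadget_closedNbhd {B U : Type*} {p : ℕ} {u : U} {x : B ⊕ U ⊕ U × Fin p}
    (hx : x ∈ insert (Sum.inr (Sum.inl u) : B ⊕ U ⊕ U × Fin p)
        ((gadget B U p).neighborSet (Sum.inr (Sum.inl u)))) :
    (∃ b, x = Sum.inl b) ∨ x = Sum.inr (Sum.inl u) ∨ ∃ i, x = Sum.inr (Sum.inr (u, i)) := by
  rcases hx with h | h
  · exact Or.inr (Or.inl h)
  · rcases h with ⟨b, u', h1, h2⟩ | ⟨b, u', h1, h2⟩ | ⟨u', i, h1, h2⟩ | ⟨u', i, h1, h2⟩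
    · exact absurd h1 (by simp)
    · exact Or.inl ⟨b, h1⟩
    · obtain rfl : u = u' := by simpa using h1
      exact Or.inr (Or.inr ⟨i, h2⟩)
    · exact absurd h2 (by simp)

/-- In the gadget graph with `|B| + p > d` and `|U| ≥ k + 1`, any `F ⊆ E(G)`
with `|F| ≤ k` such that `G/F` has maximum degree at most `d` must, for every `u ∈ U`, merge
two distinct vertices of `N[u]` into one witness set; consequently, for every `u`, either
some edge of `F` is incident to `u` or to a pendant neighbor of `u`, or two distinct vertices
of `B` lie in a common witness set. -/
theorem gadget_merging
    {B U : Type*} [Fintype B] [Fintype U] (p d k : ℕ)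
    (hdeg : d < Fintype.card B + p) (hU : k + 1 ≤ Fintype.card U)
    (F : Finset (Sym2 (B ⊕ U ⊕ U × Fin p)))
    (hFsub : ↑F ⊆ (gadget B U p).edgeSet) (hk : F.card ≤ k)
    (hmax : maxDegreeLE (contract (gadget B U p) (↑F : Set _)) d) :
    ∀ u : U,
      (∃ x ∈ insert (Sum.inr (Sum.inl u) : B ⊕ U ⊕ U × Fin p)
          ((gadget B U p).neighborSet (Sum.inr (Sum.inl u))),
        ∃ y ∈ insert (Sum.inr (Sum.inl u) : B ⊕ U ⊕ U × Fin p)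
          ((gadget B U p).neighborSet (Sum.inr (Sum.inl u))),
        x ≠ y ∧ contractMap (↑F : Set _) x = contractMap (↑F : Set _) y) ∧
      ((∃ e ∈ F, (Sum.inr (Sum.inl u) : B ⊕ U ⊕ U × Fin p) ∈ e ∨
          ∃ i : Fin p, (Sum.inr (Sum.inr (u, i)) : B ⊕ U ⊕ U × Fin p) ∈ e) ∨
        ∃ b b' : B, b ≠ b' ∧
          contractMap (↑F : Set _) (Sum.inl b : B ⊕ U ⊕ U × Fin p) =
          contractMap (↑F : Set _) (Sum.inl b' : B ⊕ U ⊕ U × Fin p)) := by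
  
  classical
  intro u
  set u' : B ⊕ U ⊕ U × Fin p := Sum.inr (Sum.inl u) with hu'
  have hadjB : ∀ b : B, (gadget B U p).Adj u' (Sum.inl b) := fun b =>
    Or.inr (Or.inl ⟨b, u, rfl, rfl⟩)
  have hadjP : ∀ i : Fin p, (gadget B U p).Adj u' (Sum.inr (Sum.inr (u, i))) := fun i =>
    Or.inr (Or.inr (Or.inl ⟨u, i, rfl, rfl⟩))
  have hmemB : ∀ b : B, (Sum.inl b : B ⊕ U ⊕ U × Fin p) ∈
      insert u' ((gadget B U p).neighborSet u') := fun b => Set.mem_insert_iff.mpr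
    (Or.inr (((gadget B U p).mem_neighborSet _ _).mpr (hadjB b)))
  have hmemP : ∀ i : Fin p, (Sum.inr (Sum.inr (u, i)) : B ⊕ U ⊕ U × Fin p) ∈
      insert u' ((gadget B U p).neighborSet u') := fun i => Set.mem_insert_iff.mpr
    (Or.inr (((gadget B U p).mem_neighborSet _ _).mpr (hadjP i)))
  have hmemU : u' ∈ insert u' ((gadget B U p).neighborSet u') := Set.mem_insert _ _
  have key : ∃ x ∈ insert u' ((gadget B U p).neighborSet u'),
      ∃ y ∈ insert u' ((gadget B U p).neighborSet u'),
      x ≠ y ∧ contractMap (↑F : Set _) x = contractMap (↑F : Set _) y := by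
    by_contra hcon
    push_neg at hcon
    -- contractMap is injective on the closed neighborhood
    have hinj : ∀ x ∈ insert u' ((gadget B U p).neighborSet u'),
        ∀ y ∈ insert u' ((gadget B U p).neighborSet u'),
        contractMap (↑F : Set _) x = contractMap (↑F : Set _) y → x = y := by
      intro x hx y hy h
      by_contra hne
      exact hcon x hx y hy hne h
    let f : B ⊕ Fin p → (SimpleGraph.fromEdgeSet ((↑F : Set (Sym2 (B ⊕ U ⊕ U × Fin p))))).ConnectedComponent :=
      Sum.elim (fun b => contractMap (↑F : Set (Sym2 (B ⊕ U ⊕ U × Fin p))) (Sum.inl b))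
        (fun i => contractMap (↑F : Set (Sym2 (B ⊕ U ⊕ U × Fin p))) (Sum.inr (Sum.inr (u, i))))
    have hvert : ∀ z : B ⊕ Fin p, ∃ v, v ∈ insert u' ((gadget B U p).neighborSet u') ∧
        v ≠ u' ∧ (gadget B U p).Adj u' v ∧ f z = contractMap (↑F : Set _) v := by
      rintro (b | i)
      · exact ⟨Sum.inl b, hmemB b, by simp [hu'], hadjB b, rfl⟩
      · exact ⟨Sum.inr (Sum.inr (u, i)), hmemP i, by simp [hu'], hadjP i, rfl⟩
    have hfinj : Function.Injective f := by
      rintro (b | i) (b' | i') h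
      · have := hinj _ (hmemB b) _ (hmemB b') h
        simpa using this
      · have := hinj _ (hmemB b) _ (hmemP i') h
        simp at this
      · have := hinj _ (hmemP i) _ (hmemB b') h
        simp at this
      · have := hinj _ (hmemP i) _ (hmemP i') h
        simpa using this
    have hsub : Set.range f ⊆
        (contract (gadget B U p) (↑F : Set _)).neighborSet (contractMap (↑F : Set _) u') := by
      rintro c ⟨z, rfl⟩
      obtain ⟨v, hv, hvne, hadj, hfz⟩ := hvert z
      refine ((contract (gadget B U p) (↑F : Set _)).mem_neighborSet _ _).mpr ?_
      refine ⟨?_, u', v, rfl, hfz.symm, hadj⟩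
      intro h
      exact hvne (hinj v hv u' hmemU (hfz.symm.trans h.symm))
    have hcard : Fintype.card B + p ≤
        ((contract (gadget B U p) (↑F : Set _)).neighborSet
          (contractMap (↑F : Set _) u')).ncard := by
      have h1 : (Set.range f).ncard = Fintype.card B + p := by
        rw [← Set.image_univ, Set.ncard_image_of_injective _ hfinj, Set.ncard_univ,
          Nat.card_eq_fintype_card]
        simp
      calc Fintype.card B + p = (Set.range f).ncard := h1.symm
        _ ≤ _ := Set.ncard_le_ncard hsub (Set.toFinite _)
    exact absurd (hcard.trans (hmax _)) (by omega)
  refine ⟨key, ?_⟩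
  obtain ⟨x, hx, y, hy, hne, heq⟩ := key
  rcases gadget_closedNbhd hx with ⟨b, rfl⟩ | hxu
  · rcases gadget_closedNbhd hy with ⟨b', rfl⟩ | hyu
    · refine Or.inr ⟨b, b', ?_, heq⟩
      intro h; exact hne (by rw [h])
    · obtain ⟨e, he, hye⟩ := merge_edge F (fun h => hne h.symm) heq.symm
      refine Or.inl ⟨e, he, ?_⟩
      rcases hyu with rfl | ⟨i, rfl⟩
      · exact Or.inl hye
      · exact Or.inr ⟨i, hye⟩
  · obtain ⟨e, he, hxe⟩ := merge_edge F hne heq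
    refine Or.inl ⟨e, he, ?_⟩
    rcases hxu with rfl | ⟨i, rfl⟩
    · exact Or.inl hxe
    · exact Or.inr ⟨i, hxe⟩
end
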